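/- Let G be a finite simple graph, let u and w be distinct nonadjacent vertices of G, let G' be the graph obtained from G by identifying u and w into a single vertex, and let φ be a proper k-coloring of G with φ(u) = φ(w), inducing the proper k-coloring φ' of G'. Then every sequence of m Kempe changes in G' transforming φ' into a proper k-coloring ψ' lifts to a sequence of Kempe changes in G transforming φ into the lifted coloring ψ (defined by ψ(x) = ψ'(image of x)); moreover, in this lifted sequence each vertex of G changes its color exactly as many times as its image in G' does. -/

import Mathlib

/-- `φ` is a proper `k`-coloring of `G`: adjacent vertices get different colors. -/
def IsProperColoring {V : Type*} (G : SimpleGraph V) (k : ℕ) (φ : V → Fin k) : Prop :=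
  ∀ ⦃u v : V⦄, G.Adj u v → φ u ≠ φ v

/-- The spanning subgraph of `G` keeping only edges between vertices colored `a` or `b`:
its connected components meeting the `a/b`-colored vertices are the Kempe chains. -/
def kempeSub {V : Type*} (G : SimpleGraph V) {k : ℕ} (φ : V → Fin k) (a b : Fin k) :
    SimpleGraph V where
  Adj x y := G.Adj x y ∧ (φ x = a ∨ φ x = b) ∧ (φ y = a ∨ φ y = b)
  symm := ⟨fun x y ⟨h, hx, hy⟩ => ⟨h.symm, hy, hx⟩⟩
  loopless := ⟨fun x h => G.irrefl h.1⟩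

/-- `ψ` is obtained from `φ` by a single Kempe change in the pair of colors `{a, b}`:
the colors `a` and `b` are swapped on the Kempe chain containing some vertex `v`
colored `a` or `b`, and all other vertices keep their color. -/
def KempeStepAB {V : Type*} (G : SimpleGraph V) {k : ℕ} (a b : Fin k) (φ ψ : V → Fin k) :
    Prop :=
  a ≠ b ∧ ∃ v : V, (φ v = a ∨ φ v = b) ∧
    (∀ u : V, (kempeSub G φ a b).Reachable v u → ψ u = Equiv.swap a b (φ u)) ∧
    (∀ u : V, ¬ (kempeSub G φ a b).Reachable v u → ψ u = φ u)

/-- `ψ` is obtained from `φ` by a single Kempe change (in some pair of colors). -/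
def KempeStep {V : Type*} (G : SimpleGraph V) (k : ℕ) (φ ψ : V → Fin k) : Prop :=
  ∃ a b : Fin k, KempeStepAB G a b φ ψ

/-- The number of indices `i < m` at which the vertex `x` changes its color in the
sequence of colorings `σ 0, σ 1, …, σ m`. -/
def changeCount {W : Type*} {k : ℕ} (m : ℕ) (σ : ℕ → W → Fin k) (x : W) : ℕ :=
  ((Finset.range m).filter fun i => σ i x ≠ σ (i + 1) x).card

/-- The map sending `x` to `u` if `x = w`, and to itself otherwise. -/
def mergeMap {V : Type*} [DecidableEq V] (u w : V) (x : V) : V := if x = w then u else x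

/-- The graph obtained from `G` by identifying the vertices `u` and `w` into the single
vertex `u`: two (distinct) vertices are adjacent iff some pair of their preimages under
`mergeMap u w` is adjacent in `G`.  (The vertex `w` is left isolated; the identified
graph `G'` proper is the induced subgraph on `{y | y ≠ w}`.) -/
def mergeGraph {V : Type*} [DecidableEq V] (G : SimpleGraph V) (u w : V) :
    SimpleGraph V where
  Adj a b := a ≠ b ∧ ∃ x y, G.Adj x y ∧ mergeMap u w x = a ∧ mergeMap u w y = b
  symm := ⟨fun a b ⟨hab, x, y, h, hx, hy⟩ => ⟨hab.symm, y, x, h.symm, hy, hx⟩⟩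
  loopless := ⟨fun a h => h.1 rfl⟩

/-- The quotient map from `V(G)` to the vertex set of the identified graph. -/
def mergeTo {V : Type*} [DecidableEq V] (u w : V) (huw : u ≠ w) (x : V) :
    ↥{y : V | y ≠ w} :=
  if h : x = w then ⟨u, huw⟩ else ⟨x, h⟩

/-!
Kempe changes pull back along graph homomorphisms. If `f : G →g H` and `τ` colors `H`,
then `f` maps every `a/b`-Kempe chain of `τ ∘ f` into an `a/b`-Kempe chain of `τ`. Hence the
preimage of the chain recolored by a Kempe change in `H` is a union of Kempe chains of `G`,
and swapping these chains one at a time realizes the pulled-back change, every vertex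
changing color exactly when its image does. Identifying two nonadjacent vertices is such a
homomorphism, and the coloring `φ` factors through it because `φ u = φ w`.
-/

section

open SimpleGraph

variable {V W : Type*} {k : ℕ}

def colorChange (φ ψ : V → Fin k) (x : V) : ℕ :=
  if φ x = ψ x then 0 else 1

@[simp]
lemma colorChange_self (φ : V → Fin k) : colorChange φ φ = 0 := by
  ext x
  simp [colorChange]

lemma changeCount_succ (m : ℕ) (σ : ℕ → W → Fin k) (x : W) :
    changeCount (m + 1) σ x = changeCount m σ x + colorChange (σ m) (σ (m + 1)) x := by
  unfold changeCount colorChange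
  rw [Finset.range_add_one, Finset.filter_insert]
  by_cases h : σ m x = σ (m + 1) x
  · simp [h]
  · simp [h, Finset.card_insert_of_notMem]

lemma changeCount_congr {m : ℕ} {σ ρ : ℕ → W → Fin k} {x : W}
    (h : ∀ i ≤ m, σ i x = ρ i x) : changeCount m σ x = changeCount m ρ x := by
  unfold changeCount
  congr 1
  refine Finset.filter_congr fun i hi => ?_
  rw [Finset.mem_range] at hi
  rw [h i hi.le, h (i + 1) hi]

/-- `KempeChanges G k φ ψ c`: some sequence of Kempe changes in `G` turns `φ` into `ψ`,
the vertex `x` changing its color at exactly `c x` of the steps. -/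
inductive KempeChanges (G : SimpleGraph V) (k : ℕ) (φ : V → Fin k) :
    (V → Fin k) → (V → ℕ) → Prop
  | refl : KempeChanges G k φ φ 0
  | tail {ψ χ : V → Fin k} {c : V → ℕ} :
      KempeChanges G k φ ψ c → KempeStep G k ψ χ → KempeChanges G k φ χ (c + colorChange ψ χ)

namespace KempeChanges

variable {G : SimpleGraph V} {φ ψ χ : V → Fin k} {c d : V → ℕ}

lemma single (h : KempeStep G k φ ψ) : KempeChanges G k φ ψ (colorChange φ ψ) := by
  simpa using refl.tail h

lemma trans (h₁ : KempeChanges G k φ ψ c) (h₂ : KempeChanges G k ψ χ d) :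
    KempeChanges G k φ χ (c + d) := by
  induction h₂ with
  | refl => simpa using h₁
  | tail _ hstep ih => simpa only [add_assoc] using ih.tail hstep

lemma exists_seq (h : KempeChanges G k φ ψ c) :
    ∃ (n : ℕ) (σ : ℕ → V → Fin k), σ 0 = φ ∧ σ n = ψ ∧
      (∀ i < n, KempeStep G k (σ i) (σ (i + 1))) ∧ ∀ x, changeCount n σ x = c x := by
  induction h with
  | refl => exact ⟨0, fun _ => φ, rfl, rfl, by simp, by simp [changeCount]⟩
  | @tail ψ χ c _ hstep ih =>
    obtain ⟨n, σ, h0, hn, hsteps, hcount⟩ := ih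
    let σ' : ℕ → V → Fin k := fun i => if i ≤ n then σ i else χ
    have hσ' : ∀ i ≤ n, σ' i = σ i := fun i hi => if_pos hi
    have hσ'n : σ' (n + 1) = χ := if_neg (by omega)
    refine ⟨n + 1, σ', by rw [hσ' 0 n.zero_le, h0], hσ'n, fun i hi => ?_, fun x => ?_⟩
    · rcases Nat.lt_succ_iff_lt_or_eq.mp hi with hi | rfl
      · rw [hσ' i hi.le, hσ' (i + 1) hi]
        exact hsteps i hi
      · rwa [hσ' i le_rfl, hσ'n, hn]
    · rw [changeCount_succ, changeCount_congr fun i hi => congrFun (hσ' i hi) x, hcount,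
        hσ' n le_rfl, hσ'n, hn]
      rfl

end KempeChanges

section KempeChains

variable {G : SimpleGraph V} {φ ψ : V → Fin k} {a b : Fin k}

lemma swap_eq_or_eq_iff (a b c : Fin k) :
    (Equiv.swap a b c = a ∨ Equiv.swap a b c = b) ↔ (c = a ∨ c = b) := by
  rw [Equiv.swap_apply_eq_iff, Equiv.swap_apply_eq_iff, Equiv.swap_apply_left,
    Equiv.swap_apply_right, or_comm]

lemma kempeSub_congr (h : ∀ x, (φ x = a ∨ φ x = b) ↔ (ψ x = a ∨ ψ x = b)) :
    kempeSub G φ a b = kempeSub G ψ a b := by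
  ext x y
  exact and_congr_right' (and_congr (h x) (h y))

lemma kempeSub_reachable_color {x y : V} (hr : (kempeSub G φ a b).Reachable x y)
    (hx : φ x = a ∨ φ x = b) : φ y = a ∨ φ y = b := by
  obtain ⟨p⟩ := hr
  induction p with
  | nil => exact hx
  | cons hadj _ ih => exact ih hadj.2.2

def _root_.SimpleGraph.Hom.kempeSub {H : SimpleGraph W} (f : G →g H) (τ : W → Fin k)
    (a b : Fin k) : kempeSub G (τ ∘ f) a b →g kempeSub H τ a b where
  toFun := f
  map_rel' := fun ⟨hadj, hx, hy⟩ => ⟨f.map_rel hadj, hx, hy⟩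

/-- Realized by one Kempe change per Kempe chain contained in `S`. -/
theorem kempeChanges_of_swap_on (hab : a ≠ b) (S : Finset V)
    (hcolor : ∀ x ∈ S, φ x = a ∨ φ x = b)
    (hclosed : ∀ x ∈ S, ∀ y, (kempeSub G φ a b).Adj x y → y ∈ S)
    (hin : ∀ x ∈ S, ψ x = Equiv.swap a b (φ x)) (hout : ∀ x ∉ S, ψ x = φ x) :
    KempeChanges G k φ ψ (colorChange φ ψ) := by
  classical
  induction S using Finset.strongInduction generalizing φ with
  | H S ih =>
  rcases S.eq_empty_or_nonempty with rfl | ⟨v, hv⟩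
  · obtain rfl : ψ = φ := funext fun x => hout x (Finset.notMem_empty x)
    simpa using KempeChanges.refl
  set K := kempeSub G φ a b
  have hchain : ∀ x, K.Reachable v x → x ∈ S := by
    suffices ∀ x y, K.Walk x y → x ∈ S → y ∈ S from fun x ⟨p⟩ => this v x p hv
    intro x y p
    induction p with
    | nil => exact id
    | cons hadj _ ih => exact fun hx => ih (hclosed _ hx _ hadj)
  let φ₁ : V → Fin k := fun x => if K.Reachable v x then Equiv.swap a b (φ x) else φ x
  have hstep : KempeStep G k φ φ₁ :=
    ⟨a, b, hab, v, hcolor v hv, fun x hx => if_pos hx, fun x hx => if_neg hx⟩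
  have hK : kempeSub G φ₁ a b = K := by
    refine kempeSub_congr fun x => ?_
    simp only [φ₁]
    split_ifs
    · exact swap_eq_or_eq_iff a b (φ x)
    · exact Iff.rfl
  let S' := S.filter fun x => ¬ K.Reachable v x
  have hS' : S' ⊂ S := Finset.filter_ssubset.mpr ⟨v, hv, not_not.mpr (Reachable.refl v)⟩
  have hrest : KempeChanges G k φ₁ ψ (colorChange φ₁ ψ) := by
    refine ih S' hS' (fun x hx => ?_) (fun x hx y hxy => ?_) (fun x hx => ?_) (fun x hx => ?_)
    all_goals simp only [S', Finset.mem_filter, not_and, not_not] at hx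
    · simpa [φ₁, hx.2] using hcolor x hx.1
    · rw [hK] at hxy
      exact Finset.mem_filter.mpr
        ⟨hclosed x hx.1 y hxy, fun hy => hx.2 (hy.trans hxy.symm.reachable)⟩
    · simpa [φ₁, hx.2] using hin x hx.1
    · by_cases hxS : x ∈ S
      · simp [φ₁, hx hxS, hin x hxS]
      · have : ¬ K.Reachable v x := fun h => hxS (hchain x h)
        simp [φ₁, this, hout x hxS]
  have hcount : colorChange φ φ₁ + colorChange φ₁ ψ = colorChange φ ψ := by
    funext x
    by_cases hx : K.Reachable v x
    · have hne : Equiv.swap a b (φ x) ≠ φ x :=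
        Equiv.swap_apply_ne_self_iff.mpr ⟨hab, hcolor x (hchain x hx)⟩
      have hψ : ψ x = Equiv.swap a b (φ x) := hin x (hchain x hx)
      simp [colorChange, φ₁, hx, hψ, Ne.symm hne]
    · simp [colorChange, φ₁, hx]
  exact hcount ▸ (KempeChanges.single hstep).trans hrest

end KempeChains

theorem KempeStep.kempeChanges_comp [Fintype V] {G : SimpleGraph V} {H : SimpleGraph W}
    (f : G →g H) {τ τ' : W → Fin k} (h : KempeStep H k τ τ') :
    KempeChanges G k (τ ∘ f) (τ' ∘ f) (colorChange τ τ' ∘ f) := by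
  classical
  obtain ⟨a, b, hab, v, hv, hswap, hkeep⟩ := h
  let K' := kempeSub H τ a b
  refine kempeChanges_of_swap_on hab (Finset.univ.filter fun x => K'.Reachable v (f x))
    (fun x hx => ?_) (fun x hx y hxy => ?_) (fun x hx => ?_) (fun x hx => ?_)
  all_goals simp only [Finset.mem_filter, Finset.mem_univ, true_and] at hx
  · exact kempeSub_reachable_color (G := H) hx hv
  · exact Finset.mem_filter.mpr
      ⟨Finset.mem_univ y, hx.trans ((f.kempeSub τ a b).map_adj hxy).reachable⟩
  · exact hswap _ hx
  · exact hkeep _ hx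

theorem kempeChanges_comp_of_seq [Fintype V] {G : SimpleGraph V} {H : SimpleGraph W}
    (f : G →g H) {m : ℕ} {σ : ℕ → W → Fin k}
    (hstep : ∀ i < m, KempeStep H k (σ i) (σ (i + 1))) :
    KempeChanges G k (σ 0 ∘ f) (σ m ∘ f) (fun x => changeCount m σ (f x)) := by
  induction m with
  | zero => exact KempeChanges.refl
  | succ m ih =>
    simp only [changeCount_succ]
    exact (ih fun i hi => hstep i (by omega)).trans
      ((hstep m m.lt_succ_self).kempeChanges_comp f)

section Merge

variable [DecidableEq V] {G : SimpleGraph V} {u w : V}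

lemma mergeTo_val (huw : u ≠ w) (x : V) : (mergeTo u w huw x).val = mergeMap u w x := by
  unfold mergeTo mergeMap
  split <;> rfl

def mergeHom (huw : u ≠ w) (hnadj : ¬ G.Adj u w) :
    G →g (mergeGraph G u w).induce {y : V | y ≠ w} where
  toFun := mergeTo u w huw
  map_rel' := by
    intro x y hxy
    refine ⟨?_, x, y, hxy, (mergeTo_val huw x).symm, (mergeTo_val huw y).symm⟩
    change (mergeTo u w huw x).val ≠ (mergeTo u w huw y).val
    rw [mergeTo_val, mergeTo_val]
    unfold mergeMap
    split_ifs with hx hy hy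
    · exact absurd (hx.trans hy.symm) (G.ne_of_adj hxy)
    · rintro rfl
      exact hnadj (hx ▸ hxy.symm)
    · rintro rfl
      exact hnadj (hy ▸ hxy)
    · exact G.ne_of_adj hxy

@[simp]
lemma coe_mergeHom (huw : u ≠ w) (hnadj : ¬ G.Adj u w) :
    ⇑(mergeHom huw hnadj) = mergeTo u w huw :=
  rfl

end Merge

end

theorem lift_kempe_sequence_merge_general {V : Type*} [Fintype V] [DecidableEq V]
    (G : SimpleGraph V) (k : ℕ) (u w : V) (huw : u ≠ w) (hnadj : ¬ G.Adj u w)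
    (φ : V → Fin k) (hc : φ u = φ w)
    (m : ℕ) (σ' : ℕ → ↥{y : V | y ≠ w} → Fin k)
    (h0 : σ' 0 = fun y => φ y.val)
    (hstep : ∀ i < m,
      KempeStep ((mergeGraph G u w).induce {y : V | y ≠ w}) k (σ' i) (σ' (i + 1))) :
    ∃ (m' : ℕ) (σ : ℕ → V → Fin k),
      σ 0 = φ ∧
      (σ m' = fun x => σ' m (mergeTo u w huw x)) ∧
      (∀ i < m', KempeStep G k (σ i) (σ (i + 1))) ∧
      (∀ x : V, changeCount m' σ x = changeCount m σ' (mergeTo u w huw x)) := by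
  have hfactor : σ' 0 ∘ mergeTo u w huw = φ := by
    funext x
    simp only [Function.comp_apply, h0, mergeTo_val, mergeMap]
    split_ifs with hx
    · rw [hc, hx]
    · rfl
  have hlift := kempeChanges_comp_of_seq (mergeHom huw hnadj) hstep
  rw [coe_mergeHom, hfactor] at hlift
  exact hlift.exists_seq

/-- Let `G'` be obtained from `G` by identifying two distinct
nonadjacent vertices `u` and `w`, and let `φ` be a proper `k`-coloring of `G` with
`φ u = φ w`, inducing the coloring `φ' = fun y => φ y` of `G'`.  Every sequence of `m`
Kempe changes in `G'` starting from `φ'` lifts to a sequence of Kempe changes in `G`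
from `φ` to the lift of the final coloring, in which every vertex of `G` changes its
color exactly as many times as its image in `G'` does. -/
theorem lift_kempe_sequence_merge {V : Type*} [Fintype V] [DecidableEq V]
    (G : SimpleGraph V) (k : ℕ) (u w : V) (huw : u ≠ w) (hnadj : ¬ G.Adj u w)
    (φ : V → Fin k) (hφ : IsProperColoring G k φ) (hc : φ u = φ w)
    (m : ℕ) (σ' : ℕ → ↥{y : V | y ≠ w} → Fin k)
    (h0 : σ' 0 = fun y => φ y.val)
    (hstep : ∀ i < m,
      KempeStep ((mergeGraph G u w).induce {y : V | y ≠ w}) k (σ' i) (σ' (i + 1))) :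
    ∃ (m' : ℕ) (σ : ℕ → V → Fin k),
      σ 0 = φ ∧
      (σ m' = fun x => σ' m (mergeTo u w huw x)) ∧
      (∀ i < m', KempeStep G k (σ i) (σ (i + 1))) ∧
      (∀ x : V, changeCount m' σ x = changeCount m σ' (mergeTo u w huw x)) :=
  lift_kempe_sequence_merge_general G k u w huw hnadj φ hc m σ' h0 hstep
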